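/- arXiv:2505.19074 — 2 statements merged into one kernel-verified Lean document; each statement's English description precedes it below -/
import Mathlib

section
/- Let 1 < p < q and let h: (0,1] → (0,∞) be a function. Suppose there is a constant C > 0 such that h(r)/h(R) ≤ C·(r/R)^q for all 0 < r < R ≤ 1. Then there is a constant C' (depending only on C, p, q) such that for all 0 < r < 1/2: (h(r)/r^p)^{1/(p-1)} · ∫_r^1 (ρ^p/h(ρ))^{1/(p-1)} dρ/ρ ≤ C'. In particular this quantity does not tend to infinity as r → 0. -/
open Real Set Filter

/-! Put `e = 1/(p-1)` and `a = (q-p)/(p-1)`. For `r ≤ ρ ≤ 1` the hypothesis gives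
`(h(r)/r^p)(ρ^p/h(ρ)) ≤ K (r/ρ)^(q-p)` with `K = max C 1`, so the integrand multiplied by
`(h(r)/r^p)^e` is at most `K^e (r/ρ)^a / ρ`, whose integral over `[r,1]` is `K^e (1 - r^a)/a`. -/

theorem div_le_max_one_mul_rpow_of_le {h : ℝ → ℝ} {q C r ρ : ℝ}
    (hpos : ∀ r ∈ Ioc (0:ℝ) 1, 0 < h r)
    (hdec : ∀ r R : ℝ, 0 < r → r < R → R ≤ 1 → h r / h R ≤ C * (r / R) ^ q)
    (hr : 0 < r) (hrρ : r ≤ ρ) (hρ : ρ ≤ 1) :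
    h r / h ρ ≤ max C 1 * (r / ρ) ^ q := by
  rcases hrρ.eq_or_lt with rfl | hlt
  · rw [div_self (hpos r ⟨hr, hρ⟩).ne', div_self hr.ne', one_rpow, mul_one]
    exact le_max_right C 1
  · calc h r / h ρ ≤ C * (r / ρ) ^ q := hdec r ρ hr hlt hρ
      _ ≤ max C 1 * (r / ρ) ^ q :=
          mul_le_mul_of_nonneg_right (le_max_left C 1)
            (rpow_nonneg (div_nonneg hr.le (hr.trans hlt).le) q)

theorem rpow_div_mul_rpow_div_le {p q K r ρ x y : ℝ} (hp : 1 < p) (hK : 0 ≤ K)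
    (hr : 0 < r) (hρ : 0 < ρ) (hx : 0 < x) (hy : 0 < y)
    (hratio : x / y ≤ K * (r / ρ) ^ q) :
    (x / r ^ p) ^ (1 / (p - 1)) * ((ρ ^ p / y) ^ (1 / (p - 1)) / ρ) ≤
      K ^ (1 / (p - 1)) * ((r / ρ) ^ ((q - p) / (p - 1)) / ρ) := by
  have hbase : x / r ^ p * (ρ ^ p / y) ≤ K * (r / ρ) ^ (q - p) := by
    calc x / r ^ p * (ρ ^ p / y) = x / y * (r / ρ) ^ (-p) := by
          rw [rpow_neg (div_nonneg hr.le hρ.le), div_rpow hr.le hρ.le]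
          field_simp
      _ ≤ K * (r / ρ) ^ q * (r / ρ) ^ (-p) := by gcongr
      _ = K * (r / ρ) ^ (q - p) := by
          rw [mul_assoc, ← rpow_add (div_pos hr hρ), ← sub_eq_add_neg]
  calc (x / r ^ p) ^ (1 / (p - 1)) * ((ρ ^ p / y) ^ (1 / (p - 1)) / ρ)
      = (x / r ^ p * (ρ ^ p / y)) ^ (1 / (p - 1)) / ρ := by
        rw [mul_rpow (by positivity) (by positivity), mul_div_assoc]
    _ ≤ (K * (r / ρ) ^ (q - p)) ^ (1 / (p - 1)) / ρ := by gcongr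
    _ = K ^ (1 / (p - 1)) * ((r / ρ) ^ ((q - p) / (p - 1)) / ρ) := by
        rw [mul_rpow hK (by positivity), ← rpow_mul (div_pos hr hρ).le, mul_one_div,
          mul_div_assoc]

theorem integral_div_rpow_div_self {r a : ℝ} (hr : 0 < r) (ha : a ≠ 0) :
    ∫ ρ in r..1, (r / ρ) ^ a / ρ = (1 - r ^ a) / a := by
  have h0 : (0:ℝ) ∉ uIcc r 1 := fun h0 => (lt_min hr one_pos).not_ge h0.1
  have hneg : -a - 1 ≠ -1 := fun h => ha (by linarith)
  calc ∫ ρ in r..1, (r / ρ) ^ a / ρ = ∫ ρ in r..1, r ^ a * ρ ^ (-a - 1) := by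
        refine intervalIntegral.integral_congr fun ρ hρ => ?_
        have hρ0 : 0 < ρ := lt_of_lt_of_le (lt_min hr one_pos) hρ.1
        rw [div_rpow hr.le hρ0.le, rpow_sub hρ0, rpow_neg hρ0.le, rpow_one]
        field_simp
    _ = (1 - r ^ a) / a := by
        rw [intervalIntegral.integral_const_mul, integral_rpow (Or.inr ⟨hneg, h0⟩),
          sub_add_cancel, one_rpow, rpow_neg hr.le]
        field_simp
        ring

theorem rpow_div_mul_integral_rpow_div_le {h : ℝ → ℝ} {p q K r : ℝ}
    (hp : 1 < p) (hpq : p < q) (hK : 0 ≤ K)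
    (hpos : ∀ r ∈ Ioc (0:ℝ) 1, 0 < h r)
    (hratio : ∀ ρ, r ≤ ρ → ρ ≤ 1 → h r / h ρ ≤ K * (r / ρ) ^ q)
    (hr0 : 0 < r) (hr1 : r ≤ 1) :
    (h r / r ^ p) ^ (1 / (p - 1)) * ∫ ρ in r..1, (ρ ^ p / h ρ) ^ (1 / (p - 1)) / ρ ≤
      K ^ (1 / (p - 1)) / ((q - p) / (p - 1)) := by
  set a := (q - p) / (p - 1)
  have ha : 0 < a := div_pos (sub_pos.mpr hpq) (sub_pos.mpr hp)
  have hhr : 0 < h r := hpos r ⟨hr0, hr1⟩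
  -- `h` need not be measurable; the Bochner integral of a non-integrable function is `0`.
  by_cases hint : IntervalIntegrable (fun ρ => (ρ ^ p / h ρ) ^ (1 / (p - 1)) / ρ)
      MeasureTheory.volume r 1
  swap
  · rw [intervalIntegral.integral_undef hint, mul_zero]
    positivity
  have hbound : IntervalIntegrable (fun ρ => K ^ (1 / (p - 1)) * ((r / ρ) ^ a / ρ))
      MeasureTheory.volume r 1 := by
    refine ContinuousOn.intervalIntegrable fun ρ hρ => ?_
    have hρ0 : 0 < ρ := lt_of_lt_of_le (lt_min hr0 one_pos) hρ.1
    exact continuousWithinAt_const.mul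
      (((continuousWithinAt_const.div continuousWithinAt_id hρ0.ne').rpow_const
        (Or.inl (div_pos hr0 hρ0).ne')).div continuousWithinAt_id hρ0.ne')
  rw [← intervalIntegral.integral_const_mul]
  calc ∫ ρ in r..1, (h r / r ^ p) ^ (1 / (p - 1)) * ((ρ ^ p / h ρ) ^ (1 / (p - 1)) / ρ)
      ≤ ∫ ρ in r..1, K ^ (1 / (p - 1)) * ((r / ρ) ^ a / ρ) := by
        refine intervalIntegral.integral_mono_on hr1 (hint.const_mul _) hbound
          fun ρ ⟨hrρ, hρ1⟩ => ?_
        have hρ0 : 0 < ρ := hr0.trans_le hrρ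
        exact rpow_div_mul_rpow_div_le hp hK hr0 hρ0 hhr (hpos ρ ⟨hρ0, hρ1⟩)
          (hratio ρ hrρ hρ1)
    _ = K ^ (1 / (p - 1)) * ((1 - r ^ a) / a) := by
        rw [intervalIntegral.integral_const_mul, integral_div_rpow_div_self hr0 ha.ne']
    _ ≤ K ^ (1 / (p - 1)) / a := by
        rw [mul_div_assoc']
        gcongr
        exact mul_le_of_le_one_right (by positivity) (by linarith [rpow_pos_of_pos hr0 a])

theorem upper_volume_bound_gives_boundedness_general (p q C : ℝ) (hp : 1 < p) (hpq : p < q) :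
    ∃ C' : ℝ, 0 < C' ∧
      ∀ h : ℝ → ℝ, (∀ r ∈ Set.Ioc (0:ℝ) 1, 0 < h r) →
        (∀ r R : ℝ, 0 < r → r < R → R ≤ 1 → h r / h R ≤ C * (r / R) ^ q) →
        (∀ r : ℝ, 0 < r → r < 1 / 2 →
          (h r / r ^ p) ^ (1 / (p - 1)) *
            ∫ ρ in r..1, (ρ ^ p / h ρ) ^ (1 / (p - 1)) / ρ ≤ C') ∧
        ¬ Tendsto
            (fun r : ℝ =>
              (h r / r ^ p) ^ (1 / (p - 1)) *
                ∫ ρ in r..1, (ρ ^ p / h ρ) ^ (1 / (p - 1)) / ρ)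
            (nhdsWithin 0 (Set.Ioi 0)) atTop := by
  have ha : 0 < (q - p) / (p - 1) := div_pos (sub_pos.mpr hpq) (sub_pos.mpr hp)
  have hK : (0:ℝ) < max C 1 := lt_max_of_lt_right one_pos
  refine ⟨max C 1 ^ (1 / (p - 1)) / ((q - p) / (p - 1)), by positivity, fun h hpos hdec => ?_⟩
  have hbound : ∀ r : ℝ, 0 < r → r < 1 / 2 →
      (h r / r ^ p) ^ (1 / (p - 1)) * ∫ ρ in r..1, (ρ ^ p / h ρ) ^ (1 / (p - 1)) / ρ ≤
        max C 1 ^ (1 / (p - 1)) / ((q - p) / (p - 1)) := fun r hr0 hr2 =>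
    rpow_div_mul_integral_rpow_div_le hp hpq hK.le hpos
      (fun _ hrρ hρ1 => div_le_max_one_mul_rpow_of_le hpos hdec hr0 hrρ hρ1) hr0 (by linarith)
  refine ⟨hbound, fun htend => ?_⟩
  have hsmall : ∀ᶠ r in nhdsWithin 0 (Ioi 0), r ∈ Ioo (0:ℝ) (1 / 2) :=
    Ioo_mem_nhdsGT (by norm_num)
  obtain ⟨r, hlarge, hr⟩ :=
    ((htend.eventually (eventually_gt_atTop _)).and hsmall).exists
  exact (hbound r hr.1 hr.2).not_gt hlarge

/-- If `1 < p < q` and `h : (0,1] → (0,∞)` satisfies `h(r)/h(R) ≤ C (r/R)^q` for all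
`0 < r < R ≤ 1`, then there is `C'` depending only on `C`, `p`, `q` such that
`(h(r)/r^p)^{1/(p-1)} ∫_r^1 (ρ^p/h(ρ))^{1/(p-1)} dρ/ρ ≤ C'` for `0 < r < 1/2`;
in particular this quantity does not tend to `∞` as `r → 0⁺`. -/
theorem upper_volume_bound_gives_boundedness (p q C : ℝ) (hp : 1 < p) (hpq : p < q)
    (hC : 0 < C) :
    ∃ C' : ℝ, 0 < C' ∧
      ∀ h : ℝ → ℝ, (∀ r ∈ Set.Ioc (0:ℝ) 1, 0 < h r) →
        (∀ r R : ℝ, 0 < r → r < R → R ≤ 1 → h r / h R ≤ C * (r / R) ^ q) →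
        (∀ r : ℝ, 0 < r → r < 1 / 2 →
          (h r / r ^ p) ^ (1 / (p - 1)) *
            ∫ ρ in r..1, (ρ ^ p / h ρ) ^ (1 / (p - 1)) / ρ ≤ C') ∧
        ¬ Tendsto
            (fun r : ℝ =>
              (h r / r ^ p) ^ (1 / (p - 1)) *
                ∫ ρ in r..1, (ρ ^ p / h ρ) ^ (1 / (p - 1)) / ρ)
            (nhdsWithin 0 (Set.Ioi 0)) atTop :=
  upper_volume_bound_gives_boundedness_general p q C hp hpq
end

section
/- Let 1 < p < ∞ and let h: (0,1] → (0,∞) be nondecreasing and doubling in the sense that h(2t) ≤ C_D · h(t) whenever 0 < t ≤ 1/2. Suppose there exist sequences 0 < r_j < R_j ≤ 1/2 with R_j → 0 and h(r_j)/h(R_j) ≥ j·(r_j/R_j)^p for all j ≥ 1. Then limsup_{j→∞} (h(r_j)/r_j^p)^{1/(p-1)} · ∫_{r_j}^1 (ρ^p/h(ρ))^{1/(p-1)} dρ/ρ = ∞. -/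
/-!
Write `e = 1/(p-1)`. On the annulus `[R, 2R]` monotonicity and doubling give
`ρ^p / h ρ ≥ R^p / (C_D h R)`, so the integral over `[r, 1] ⊇ [R, 2R]` is at least
`(R^p / (C_D h R))^e / 2`. Multiplying by `(h r / r^p)^e` leaves
`((h r / h R) (R / r)^p / C_D)^e / 2 ≥ (j / C_D)^e / 2`, which tends to infinity.
-/

open Real Set Filter MeasureTheory

section RpowKernel

variable {h : ℝ → ℝ} {p e : ℝ}

theorem intervalIntegrable_rpow_div_rpow_div_of_monotoneOn {a b : ℝ} (ha : 0 < a) (hab : a ≤ b)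
    (hp : 0 ≤ p) (he : 0 ≤ e) (hmono : MonotoneOn h (Icc a b)) (hha : 0 < h a) :
    IntervalIntegrable (fun ρ => (ρ ^ p / h ρ) ^ e / ρ) volume a b := by
  rw [intervalIntegrable_iff_integrableOn_Ioc_of_le hab]
  have hmeas : AEMeasurable h (volume.restrict (Ioc a b)) :=
    (aemeasurable_restrict_of_monotoneOn measurableSet_Icc hmono).mono_measure
      (Measure.restrict_mono Ioc_subset_Icc_self le_rfl)
  refine IntegrableOn.of_bound measure_Ioc_lt_top
    ((((measurable_id.pow_const p).aemeasurable.div hmeas).pow_const e).div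
      aemeasurable_id).aestronglyMeasurable ((b ^ p / h a) ^ e / a) ?_
  filter_upwards [ae_restrict_mem measurableSet_Ioc] with ρ ⟨haρ, hρb⟩
  have hρ : 0 < ρ := ha.trans haρ
  have hhρ : h a ≤ h ρ := hmono ⟨le_rfl, hab⟩ ⟨haρ.le, hρb⟩ haρ.le
  have hbase₀ : 0 ≤ ρ ^ p / h ρ := div_nonneg (by positivity) (hha.le.trans hhρ)
  have hbase : ρ ^ p / h ρ ≤ b ^ p / h a :=
    div_le_div₀ (rpow_nonneg (ha.le.trans hab) p) (rpow_le_rpow hρ.le hρb hp) hha hhρ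
  rw [Real.norm_of_nonneg (by positivity)]
  exact div_le_div₀ (rpow_nonneg (hbase₀.trans hbase) e) (rpow_le_rpow hbase₀ hbase he) ha haρ.le

theorem rpow_div_le_integral_of_doubling {R C : ℝ} (hR : 0 < R) (hp : 0 ≤ p) (he : 0 ≤ e)
    (hmono : MonotoneOn h (Icc R (2 * R))) (hhR : 0 < h R) (hdoub : h (2 * R) ≤ C * h R) :
    (R ^ p / (C * h R)) ^ e / 2 ≤ ∫ ρ in R..2 * R, (ρ ^ p / h ρ) ^ e / ρ := by
  set X := R ^ p / (C * h R)
  have hX : 0 ≤ X := div_nonneg (by positivity) (hhR.le.trans (le_trans (hmono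
    ⟨le_rfl, by linarith⟩ ⟨by linarith, le_rfl⟩ (by linarith)) hdoub))
  have hlower : ∀ ρ ∈ Icc R (2 * R), X ^ e / (2 * R) ≤ (ρ ^ p / h ρ) ^ e / ρ := by
    intro ρ hρ
    have hρ0 : 0 < ρ := hR.trans_le hρ.1
    have hhρ : 0 < h ρ := hhR.trans_le (hmono ⟨le_rfl, by linarith⟩ hρ hρ.1)
    have hhρC : h ρ ≤ C * h R := (hmono hρ ⟨by linarith, le_rfl⟩ hρ.2).trans hdoub
    have hbase : X ≤ ρ ^ p / h ρ :=
      div_le_div₀ (by positivity) (rpow_le_rpow hR.le hρ.1 hp) hhρ hhρC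
    exact div_le_div₀ (by positivity) (rpow_le_rpow hX hbase he) hρ0 hρ.2
  calc X ^ e / 2 = ∫ _ in R..2 * R, X ^ e / (2 * R) := by
        rw [intervalIntegral.integral_const, smul_eq_mul]; field_simp; ring
    _ ≤ ∫ ρ in R..2 * R, (ρ ^ p / h ρ) ^ e / ρ :=
        intervalIntegral.integral_mono_on (by linarith) intervalIntegrable_const
          (intervalIntegrable_rpow_div_rpow_div_of_monotoneOn hR (by linarith) hp he hmono
            hhR) hlower

theorem div_rpow_le_rpow_mul_integral {C k r R : ℝ} (hp : 0 ≤ p) (he : 0 ≤ e) (hk : 0 ≤ k)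
    (hr : 0 < r) (hrR : r < R) (hR : R ≤ 1 / 2) (hmono : MonotoneOn h (Icc r 1)) (hhr : 0 < h r)
    (hdoub : h (2 * R) ≤ C * h R) (hratio : k * (r / R) ^ p ≤ h r / h R) :
    (k / C) ^ e / 2 ≤ (h r / r ^ p) ^ e * ∫ ρ in r..1, (ρ ^ p / h ρ) ^ e / ρ := by
  have hR0 : 0 < R := hr.trans hrR
  have hhR : 0 < h R := hhr.trans_le (hmono ⟨le_rfl, by linarith⟩ ⟨hrR.le, by linarith⟩ hrR.le)
  have hC : 0 < C := pos_of_mul_pos_left ((hhR.trans_le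
    (hmono ⟨hrR.le, by linarith⟩ ⟨by linarith, by linarith⟩ (by linarith))).trans_le hdoub) hhR.le
  have hratio' : k / C ≤ h r / r ^ p * (R ^ p / (C * h R)) := by
    rw [div_rpow hr.le hR0.le, ← le_div_iff₀ (by positivity)] at hratio
    calc k / C ≤ h r / h R / (r ^ p / R ^ p) / C := div_le_div_of_nonneg_right hratio hC.le
      _ = h r / r ^ p * (R ^ p / (C * h R)) := by field_simp
  have hannulus := rpow_div_le_integral_of_doubling hR0 hp he
    (hmono.mono (Icc_subset_Icc hrR.le (by linarith))) hhR hdoub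
  have hinterval : ∫ ρ in R..2 * R, (ρ ^ p / h ρ) ^ e / ρ ≤ ∫ ρ in r..1, (ρ ^ p / h ρ) ^ e / ρ := by
    refine intervalIntegral.integral_mono_interval hrR.le (by linarith) (by linarith) ?_
      (intervalIntegrable_rpow_div_rpow_div_of_monotoneOn hr (by linarith) hp he hmono hhr)
    filter_upwards [ae_restrict_mem measurableSet_Ioc] with ρ ⟨hrρ, hρ1⟩
    have hhρ : 0 < h ρ := hhr.trans_le (hmono ⟨le_rfl, by linarith⟩ ⟨hrρ.le, hρ1⟩ hrρ.le)
    have hρ : 0 < ρ := hr.trans hrρ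
    positivity
  calc (k / C) ^ e / 2 ≤ (h r / r ^ p * (R ^ p / (C * h R))) ^ e / 2 := by
        gcongr
    _ = (h r / r ^ p) ^ e * ((R ^ p / (C * h R)) ^ e / 2) := by
        rw [mul_rpow (by positivity) (by positivity), mul_div_assoc]
    _ ≤ (h r / r ^ p) ^ e * ∫ ρ in r..1, (ρ ^ p / h ρ) ^ e / ρ := by
        gcongr
        exact hannulus.trans hinterval

end RpowKernel

theorem failure_of_lower_exponent_gives_limsup_infinite_general (p C_D : ℝ) (hp : 1 < p)
    (h : ℝ → ℝ) (hpos : ∀ t ∈ Set.Ioc (0:ℝ) 1, 0 < h t)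
    (hmono : MonotoneOn h (Set.Ioc (0:ℝ) 1))
    (hdoub : ∀ t : ℝ, 0 < t → t ≤ 1 / 2 → h (2 * t) ≤ C_D * h t)
    (r R : ℕ → ℝ)
    (hrR : ∀ j : ℕ, 0 < r j ∧ r j < R j ∧ R j ≤ 1 / 2)
    (hratio : ∀ j : ℕ, 1 ≤ j → (j : ℝ) * (r j / R j) ^ p ≤ h (r j) / h (R j)) :
    Filter.limsup
      (fun j : ℕ =>
        (((h (r j) / (r j) ^ p) ^ (1 / (p - 1)) *
          ∫ ρ in (r j)..1, (ρ ^ p / h ρ) ^ (1 / (p - 1)) / ρ : ℝ) : EReal))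
      Filter.atTop = ⊤ := by
  have he : 0 < 1 / (p - 1) := one_div_pos.2 (sub_pos.2 hp)
  have hCD : 0 < C_D := pos_of_mul_pos_left
    ((hpos _ ⟨by norm_num, by norm_num⟩).trans_le (hdoub (1 / 4) (by norm_num) (by norm_num)))
    (hpos _ ⟨by norm_num, by norm_num⟩).le
  have hlower : ∀ j : ℕ, 1 ≤ j → ((j : ℝ) / C_D) ^ (1 / (p - 1)) / 2 ≤
      (h (r j) / r j ^ p) ^ (1 / (p - 1)) * ∫ ρ in r j..1, (ρ ^ p / h ρ) ^ (1 / (p - 1)) / ρ := by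
    intro j hj
    obtain ⟨hr, hrR, hR⟩ := hrR j
    exact div_rpow_le_rpow_mul_integral (by linarith) he.le j.cast_nonneg hr hrR hR
      (hmono.mono (Icc_subset_Ioc hr le_rfl)) (hpos _ ⟨hr, by linarith⟩)
      (hdoub _ (hr.trans hrR) hR) (hratio j hj)
  have hgrowth : Tendsto (fun j : ℕ => ((j : ℝ) / C_D) ^ (1 / (p - 1)) / 2) atTop atTop :=
    ((tendsto_rpow_atTop he).comp
      (tendsto_natCast_atTop_atTop.atTop_div_const hCD)).atTop_div_const two_pos
  refine (EReal.tendsto_coe_nhds_top_iff.2 (tendsto_atTop_mono' atTop ?_ hgrowth)).limsup_eq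
  filter_upwards [eventually_ge_atTop 1] with j hj using hlower j hj

/-- If `1 < p`, `h : (0,1] → (0,∞)` is nondecreasing and doubling, and there are sequences
`0 < r_j < R_j ≤ 1/2` with `R_j → 0` and `h(r_j)/h(R_j) ≥ j (r_j/R_j)^p`, then
`limsup_j (h(r_j)/r_j^p)^{1/(p-1)} ∫_{r_j}^1 (ρ^p/h(ρ))^{1/(p-1)} dρ/ρ = ∞`. -/
theorem failure_of_lower_exponent_gives_limsup_infinite (p C_D : ℝ) (hp : 1 < p)
    (h : ℝ → ℝ) (hpos : ∀ t ∈ Set.Ioc (0:ℝ) 1, 0 < h t)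
    (hmono : MonotoneOn h (Set.Ioc (0:ℝ) 1))
    (hdoub : ∀ t : ℝ, 0 < t → t ≤ 1 / 2 → h (2 * t) ≤ C_D * h t)
    (r R : ℕ → ℝ)
    (hrR : ∀ j : ℕ, 0 < r j ∧ r j < R j ∧ R j ≤ 1 / 2)
    (hR0 : Tendsto R atTop (nhds 0))
    (hratio : ∀ j : ℕ, 1 ≤ j → (j : ℝ) * (r j / R j) ^ p ≤ h (r j) / h (R j)) :
    Filter.limsup
      (fun j : ℕ =>
        (((h (r j) / (r j) ^ p) ^ (1 / (p - 1)) *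
          ∫ ρ in (r j)..1, (ρ ^ p / h ρ) ^ (1 / (p - 1)) / ρ : ℝ) : EReal))
      Filter.atTop = ⊤ :=
  failure_of_lower_exponent_gives_limsup_infinite_general p C_D hp h hpos hmono hdoub r R hrR hratio
end
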